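/- The deflection d-tensors of the autonomous metrical multi-time Lagrange space of electrodynamics, namely D̄^{(i)}_{(α)β} = δy^i_α/δt^β − Σ_γ H^γ_{αβ} y^i_γ, D^{(i)}_{(α)j} = δy^i_α/δx^j + Σ_k γ^i_{kj} y^k_α, and d^{(i)(β)}_{(α)(j)} = ∂y^i_α/∂y^j_β, satisfy for all indices and all (t,x,y): D̄^{(i)}_{(α)β} = 0, D^{(i)}_{(α)j} = −(1/4)Σ_{μ,m} g^{im}(x) h_{αμ}(t) U^{(μ)}_{(m)j}(t,x), and d^{(i)(β)}_{(α)(j)} = δ^i_j δ^β_α (Kronecker deltas). -/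
import Mathlib


/- STATEMENT 7: The deflection d-tensors of the autonomous metrical multi-time Lagrange
space of electrodynamics satisfy `D̄^{(i)}_{(α)β} = 0`,
`D^{(i)}_{(α)j} = −(1/4)Σ_{μ,m} g^{im} h_{αμ} U^{(μ)}_{(m)j}` and
`d^{(i)(β)}_{(α)(j)} = δ^i_j δ^β_α`. -/

open scoped BigOperators

noncomputable section

def pd {m : ℕ} (f : (Fin m → ℝ) → ℝ) (a : Fin m) (t : Fin m → ℝ) : ℝ :=
  fderiv ℝ f t (Pi.single a 1)

def pdY {n p : ℕ} (f : (Fin n → Fin p → ℝ) → ℝ) (i : Fin n) (a : Fin p)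
    (y : Fin n → Fin p → ℝ) : ℝ :=
  fderiv ℝ f y (Pi.single i (Pi.single a 1))

/-- Christoffel symbols `H^c_{ab}` of the temporal metric `h`. -/
def chT {p : ℕ} (h : (Fin p → ℝ) → Matrix (Fin p) (Fin p) ℝ)
    (c a b : Fin p) (t : Fin p → ℝ) : ℝ :=
  (1/2) * ∑ e, (h t)⁻¹ c e *
    (pd (fun s => h s e a) b t + pd (fun s => h s e b) a t - pd (fun s => h s a b) e t)

/-- Christoffel symbols `γ^i_{jk}` of the spatial metric `g`. -/
def chS {n : ℕ} (g : (Fin n → ℝ) → Matrix (Fin n) (Fin n) ℝ)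
    (i j k : Fin n) (x : Fin n → ℝ) : ℝ :=
  (1/2) * ∑ m, (g x)⁻¹ i m *
    (pd (fun z => g z m j) k x + pd (fun z => g z m k) j x - pd (fun z => g z j k) m x)

/-- `U^{(a)}_{(i)j} = ∂U^{(a)}_{(i)}/∂x^j − ∂U^{(a)}_{(j)}/∂x^i`. -/
def Ucurl {p n : ℕ} (U : Fin p → Fin n → (Fin p → ℝ) → (Fin n → ℝ) → ℝ)
    (a : Fin p) (i j : Fin n) (t : Fin p → ℝ) (x : Fin n → ℝ) : ℝ :=
  pd (fun z => U a i t z) j x - pd (fun z => U a j t z) i x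

/-- Temporal components `M^{(i)}_{(a)b} = −Σ_c H^c_{ab}(t) y^i_c` of the canonical
nonlinear connection. -/
def Mcon {p n : ℕ} (h : (Fin p → ℝ) → Matrix (Fin p) (Fin p) ℝ)
    (i : Fin n) (a b : Fin p) (t : Fin p → ℝ) (y : Fin n → Fin p → ℝ) : ℝ :=
  -∑ c, chT h c a b t * y i c

/-- Spatial components
`N^{(i)}_{(a)j} = Σ_k γ^i_{jk}(x) y^k_a + (1/4)Σ_{c,l} h_{ac}(t) g^{il}(x) U^{(c)}_{(l)j}(t,x)`
of the canonical nonlinear connection. -/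
def Ncon {p n : ℕ} (h : (Fin p → ℝ) → Matrix (Fin p) (Fin p) ℝ)
    (g : (Fin n → ℝ) → Matrix (Fin n) (Fin n) ℝ)
    (U : Fin p → Fin n → (Fin p → ℝ) → (Fin n → ℝ) → ℝ)
    (i : Fin n) (a : Fin p) (j : Fin n) (t : Fin p → ℝ) (x : Fin n → ℝ)
    (y : Fin n → Fin p → ℝ) : ℝ :=
  (∑ k, chS g i j k x * y k a)
    + (1/4) * ∑ c, ∑ l, h t a c * (g x)⁻¹ i l * Ucurl U c l j t x

/-- Adapted temporal derivative `δ/δt^b = ∂/∂t^b − Σ_{k,c} M^{(k)}_{(c)b} ∂/∂y^k_c`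
applied to a function on the 1-jet space. -/
def deltaT {p n : ℕ} (h : (Fin p → ℝ) → Matrix (Fin p) (Fin p) ℝ)
    (J : (Fin p → ℝ) → (Fin n → ℝ) → (Fin n → Fin p → ℝ) → ℝ) (b : Fin p)
    (t : Fin p → ℝ) (x : Fin n → ℝ) (y : Fin n → Fin p → ℝ) : ℝ :=
  pd (fun s => J s x y) b t - ∑ k, ∑ c, Mcon h k c b t y * pdY (J t x) k c y

/-- Adapted spatial derivative `δ/δx^j = ∂/∂x^j − Σ_{k,c} N^{(k)}_{(c)j} ∂/∂y^k_c`
applied to a function on the 1-jet space. -/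
def deltaX {p n : ℕ} (h : (Fin p → ℝ) → Matrix (Fin p) (Fin p) ℝ)
    (g : (Fin n → ℝ) → Matrix (Fin n) (Fin n) ℝ)
    (U : Fin p → Fin n → (Fin p → ℝ) → (Fin n → ℝ) → ℝ)
    (J : (Fin p → ℝ) → (Fin n → ℝ) → (Fin n → Fin p → ℝ) → ℝ) (j : Fin n)
    (t : Fin p → ℝ) (x : Fin n → ℝ) (y : Fin n → Fin p → ℝ) : ℝ :=
  pd (fun z => J t z y) j x - ∑ k, ∑ c, Ncon h g U k c j t x y * pdY (J t x) k c y

/-- Temporal deflection `D̄^{(i)}_{(α)β} = δy^i_α/δt^β − Σ_γ H^γ_{αβ} y^i_γ`. -/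
def deflT {p n : ℕ} (h : (Fin p → ℝ) → Matrix (Fin p) (Fin p) ℝ)
    (i : Fin n) (a b : Fin p)
    (t : Fin p → ℝ) (x : Fin n → ℝ) (y : Fin n → Fin p → ℝ) : ℝ :=
  deltaT h (fun _ _ w => w i a) b t x y - ∑ c, chT h c a b t * y i c

/-- Spatial deflection `D^{(i)}_{(α)j} = δy^i_α/δx^j + Σ_k γ^i_{kj} y^k_α`. -/
def deflS {p n : ℕ} (h : (Fin p → ℝ) → Matrix (Fin p) (Fin p) ℝ)
    (g : (Fin n → ℝ) → Matrix (Fin n) (Fin n) ℝ)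
    (U : Fin p → Fin n → (Fin p → ℝ) → (Fin n → ℝ) → ℝ)
    (i : Fin n) (a : Fin p) (j : Fin n)
    (t : Fin p → ℝ) (x : Fin n → ℝ) (y : Fin n → Fin p → ℝ) : ℝ :=
  deltaX h g U (fun _ _ w => w i a) j t x y + ∑ k, chS g i k j x * y k a

/-- Vertical deflection `d^{(i)(β)}_{(α)(j)} = ∂y^i_α/∂y^j_β`. -/
def deflV {p n : ℕ} (i : Fin n) (a : Fin p) (j : Fin n) (b : Fin p)
    (y : Fin n → Fin p → ℝ) : ℝ :=
  pdY (fun w : Fin n → Fin p → ℝ => w i a) j b y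

lemma pdY_eval {n p : ℕ} (i k : Fin n) (a c : Fin p) (y : Fin n → Fin p → ℝ) :
    pdY (fun w : Fin n → Fin p → ℝ => w i a) k c y =
      (if i = k then (1:ℝ) else 0) * (if a = c then 1 else 0) := by
  unfold pdY
  have : (fun w : Fin n → Fin p → ℝ => w i a) =
      ((ContinuousLinearMap.proj (R := ℝ) (φ := fun _ : Fin p => ℝ) a).comp
        (ContinuousLinearMap.proj (R := ℝ) (φ := fun _ : Fin n => Fin p → ℝ) i)) := rfl
  rw [this, ContinuousLinearMap.fderiv]
  simp only [ContinuousLinearMap.coe_comp', Function.comp_apply,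
    ContinuousLinearMap.proj_apply, Pi.single_apply]
  split_ifs <;> simp_all [Pi.single_apply]

lemma sum_pdY {n p : ℕ} (A : Fin n → Fin p → ℝ) (i : Fin n) (a : Fin p)
    (y : Fin n → Fin p → ℝ) :
    ∑ k, ∑ c, A k c * pdY (fun w : Fin n → Fin p → ℝ => w i a) k c y = A i a := by
  simp only [pdY_eval, mul_ite, mul_one, mul_zero, ite_mul, one_mul, zero_mul]
  rw [Finset.sum_comm]
  simp [Finset.sum_ite_eq]

theorem deflection_d_tensors {p n : ℕ}
    (h : (Fin p → ℝ) → Matrix (Fin p) (Fin p) ℝ)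
    (g : (Fin n → ℝ) → Matrix (Fin n) (Fin n) ℝ)
    (U : Fin p → Fin n → (Fin p → ℝ) → (Fin n → ℝ) → ℝ)
    (hsmooth : ∀ a b, ContDiff ℝ (⊤ : ℕ∞) (fun t => h t a b))
    (hsymm : ∀ t, (h t).IsSymm)
    (hinv : ∀ t, IsUnit (h t).det)
    (gsmooth : ∀ i j, ContDiff ℝ (⊤ : ℕ∞) (fun x => g x i j))
    (gsymm : ∀ x, (g x).IsSymm)
    (ginv : ∀ x, IsUnit (g x).det)
    (Usmooth : ∀ a i, ContDiff ℝ (⊤ : ℕ∞) (fun q : (Fin p → ℝ) × (Fin n → ℝ) => U a i q.1 q.2)) :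
    (∀ (i : Fin n) (a b : Fin p) (t : Fin p → ℝ) (x : Fin n → ℝ) (y : Fin n → Fin p → ℝ),
      deflT h i a b t x y = 0) ∧
    (∀ (i : Fin n) (a : Fin p) (j : Fin n) (t : Fin p → ℝ) (x : Fin n → ℝ)
        (y : Fin n → Fin p → ℝ),
      deflS h g U i a j t x y =
        -(1/4) * ∑ mu, ∑ m, (g x)⁻¹ i m * h t a mu * Ucurl U mu m j t x) ∧
    (∀ (i : Fin n) (a : Fin p) (j : Fin n) (b : Fin p) (y : Fin n → Fin p → ℝ),
      deflV i a j b y =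
        (if i = j then (1 : ℝ) else 0) * (if b = a then (1 : ℝ) else 0)) := by
  refine ⟨?_, ?_, ?_⟩
  · intro i a b t x y
    have e1 : deltaT h (fun _ _ w => w i a) b t x y = -Mcon h i a b t y := by
      unfold deltaT
      rw [sum_pdY (fun k c => Mcon h k c b t y)]
      simp [pd]
    rw [deflT, e1, Mcon]
    ring
  · intro i a j t x y
    have hsym : ∀ k m : Fin n, chS g i k m x = chS g i m k x := by
      intro k m
      unfold chS
      congr 1
      apply Finset.sum_congr rfl
      intro l _
      have hg : (fun z => g z k m) = (fun z => g z m k) := by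
        funext z; exact congrFun (congrFun (gsymm z).eq m) k
      rw [hg]; ring
    have e1 : deltaX h g U (fun _ _ w => w i a) j t x y = -Ncon h g U i a j t x y := by
      unfold deltaX
      rw [sum_pdY (fun k c => Ncon h g U k c j t x y)]
      simp [pd]
    rw [deflS, e1, Ncon]
    rw [show ∑ k, chS g i k j x * y k a = ∑ k, chS g i j k x * y k a from
      Finset.sum_congr rfl (fun k _ => by rw [hsym])]
    have hB : (1/4 : ℝ) * ∑ c, ∑ l, h t a c * (g x)⁻¹ i l * Ucurl U c l j t x
        = -(-(1/4) * ∑ mu, ∑ m, (g x)⁻¹ i m * h t a mu * Ucurl U mu m j t x) := by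
      rw [neg_mul, neg_neg]
      congr 1
      apply Finset.sum_congr rfl; intro c _
      apply Finset.sum_congr rfl; intro l _
      ring
    rw [hB]; ring
  · intro i a j b y
    rw [deflV, pdY_eval]
    by_cases hij : i = j <;> by_cases hab : a = b <;>
      simp [hij, hab, eq_comm (a := b) (b := a)]

end
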